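/- Fix constants γ > 0, β > 0, α₂ > 0, real numbers ξ and u (playing the role of U'(q)) with ξ + γ < 0. Define ψ : ℝ → ℝ by ψ(p) = −2α₂·∫₀^{c(p − u/|ξ+γ|)} D(z) dz, where c = |ξ+γ|^{1/2} / (2γ/β)^{1/2} and D is Dawson's integral. Then ψ is twice differentiable and satisfies, for every p ∈ ℝ, the ordinary differential equation −(ξ+γ)·p·ψ'(p) − u·ψ'(p) + (γ/β)·ψ''(p) = −α₂·|ξ+γ|. -/

import Mathlib

open Filter

noncomputable section

/-- Dawson's integral `D(z) = exp(−z²)·∫₀^z exp(y²) dy`. -/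
def dawson (z : ℝ) : ℝ := Real.exp (-z ^ 2) * ∫ y in (0:ℝ)..z, Real.exp (y ^ 2)

/-- The explicit solution `ψ(p) = −2α₂·∫₀^{c(p − u/|ξ+γ|)} D(z) dz` with
`c = |ξ+γ|^{1/2}/(2γ/β)^{1/2}`. -/
def psiOU (γ β α₂ ξ u : ℝ) (p : ℝ) : ℝ :=
  -2 * α₂ * ∫ z in (0:ℝ)..(Real.sqrt |ξ + γ| / Real.sqrt (2 * γ / β) * (p - u / |ξ + γ|)),
    dawson z

/-!
With `k = |ξ+γ|` and `x = c(p − u/k)`, the drift `−(ξ+γ)p − u` equals `(k/c)·x`, so the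
left-hand side of the ODE for `ψ(p) = A·∫₀^{x} D` is `k·x·A·D(x) + (γ/β)·c²·A·(1 − 2xD(x))`.
The choice of `c` makes `2(γ/β)c² = k`, so the Dawson terms cancel (this is `D' = 1 − 2zD`)
and `A·k/2` remains.
-/

theorem hasDerivAt_dawson (z : ℝ) : HasDerivAt dawson (1 - 2 * z * dawson z) z := by
  have hcont : Continuous fun y : ℝ => Real.exp (y ^ 2) := by fun_prop
  have hint : HasDerivAt (fun t => ∫ y in (0:ℝ)..t, Real.exp (y ^ 2)) (Real.exp (z ^ 2)) z :=
    intervalIntegral.integral_hasDerivAt_right (hcont.intervalIntegrable _ _)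
      (hcont.stronglyMeasurableAtFilter _ _) hcont.continuousAt
  have hgauss : HasDerivAt (fun t : ℝ => Real.exp (-t ^ 2)) (Real.exp (-z ^ 2) * (-(2 * z))) z :=
    (Real.hasDerivAt_exp _).comp z ((hasDerivAt_pow 2 z).neg.congr_deriv (by ring))
  have hcancel : Real.exp (-z ^ 2) * Real.exp (z ^ 2) = 1 := by
    rw [← Real.exp_add, neg_add_cancel, Real.exp_zero]
  rw [show 1 - 2 * z * dawson z = Real.exp (-z ^ 2) * (-(2 * z)) *
      (∫ y in (0:ℝ)..z, Real.exp (y ^ 2)) + Real.exp (-z ^ 2) * Real.exp (z ^ 2) by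
    rw [hcancel, dawson]; ring]
  exact hgauss.mul hint

theorem continuous_dawson : Continuous dawson :=
  continuous_iff_continuousAt.2 fun z => (hasDerivAt_dawson z).continuousAt

section AffineDawsonPrimitive

variable (A c a : ℝ)

theorem hasDerivAt_const_mul_integral_dawson (p : ℝ) :
    HasDerivAt (fun p => A * ∫ z in (0:ℝ)..c * (p - a), dawson z)
      (A * c * dawson (c * (p - a))) p := by
  have hinner : HasDerivAt (fun p : ℝ => c * (p - a)) c p := by
    simpa using ((hasDerivAt_id p).sub_const a).const_mul c
  have hprim := intervalIntegral.integral_hasDerivAt_right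
    (continuous_dawson.intervalIntegrable 0 (c * (p - a)))
    (continuous_dawson.stronglyMeasurableAtFilter _ _) continuous_dawson.continuousAt
  rw [show A * c * dawson (c * (p - a)) = A * (dawson (c * (p - a)) * c) by ring]
  exact (hprim.comp p hinner).const_mul A

theorem deriv_const_mul_integral_dawson :
    deriv (fun p => A * ∫ z in (0:ℝ)..c * (p - a), dawson z)
      = fun p => A * c * dawson (c * (p - a)) :=
  funext fun p => (hasDerivAt_const_mul_integral_dawson A c a p).deriv

theorem hasDerivAt_const_mul_dawson_affine (p : ℝ) :
    HasDerivAt (fun p => A * c * dawson (c * (p - a)))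
      (A * c ^ 2 * (1 - 2 * (c * (p - a)) * dawson (c * (p - a)))) p := by
  have hinner : HasDerivAt (fun p : ℝ => c * (p - a)) c p := by
    simpa using ((hasDerivAt_id p).sub_const a).const_mul c
  rw [show A * c ^ 2 * (1 - 2 * (c * (p - a)) * dawson (c * (p - a)))
      = A * c * ((1 - 2 * (c * (p - a)) * dawson (c * (p - a))) * c) by ring]
  exact ((hasDerivAt_dawson _).comp p hinner).const_mul (A * c)

theorem const_mul_integral_dawson_solves_ODE {k g : ℝ} (hc : 2 * g * c ^ 2 = k) (p : ℝ) :
    k * (p - a) * deriv (fun p => A * ∫ z in (0:ℝ)..c * (p - a), dawson z) p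
        + g * deriv (deriv fun p => A * ∫ z in (0:ℝ)..c * (p - a), dawson z) p
      = A * g * c ^ 2 := by
  rw [deriv_const_mul_integral_dawson, (hasDerivAt_const_mul_dawson_affine A c a p).deriv]
  linear_combination A * (p - a) * c * dawson (c * (p - a)) * hc.symm

end AffineDawsonPrimitive

theorem psiOU_solves_ODE_general (γ β α₂ ξ u : ℝ) (hγ : 0 < γ) (hβ : 0 < β)
    (hξ : ξ + γ < 0) :
    (∀ p : ℝ, DifferentiableAt ℝ (psiOU γ β α₂ ξ u) p) ∧
    (∀ p : ℝ, DifferentiableAt ℝ (deriv (psiOU γ β α₂ ξ u)) p) ∧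
    ∀ p : ℝ,
      -(ξ + γ) * p * deriv (psiOU γ β α₂ ξ u) p - u * deriv (psiOU γ β α₂ ξ u) p
          + γ / β * deriv (deriv (psiOU γ β α₂ ξ u)) p
        = -α₂ * |ξ + γ| := by
  set k := |ξ + γ|
  have hk : k = -(ξ + γ) := abs_of_neg hξ
  have hkpos : 0 < k := abs_pos.2 hξ.ne
  have hku : k * (u / k) = u := mul_div_cancel₀ u hkpos.ne'
  set c := Real.sqrt k / Real.sqrt (2 * γ / β)
  have hc : 2 * (γ / β) * c ^ 2 = k := by
    rw [div_pow, Real.sq_sqrt hkpos.le, Real.sq_sqrt (by positivity)]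
    field_simp
  have hψ : psiOU γ β α₂ ξ u = fun p => -2 * α₂ * ∫ z in (0:ℝ)..c * (p - u / k), dawson z := rfl
  rw [hψ, deriv_const_mul_integral_dawson]
  refine ⟨fun p => (hasDerivAt_const_mul_integral_dawson _ _ _ p).differentiableAt,
    fun p => (hasDerivAt_const_mul_dawson_affine _ _ _ p).differentiableAt, fun p => ?_⟩
  have hode := const_mul_integral_dawson_solves_ODE (-2 * α₂) c (u / k) hc p
  rw [deriv_const_mul_integral_dawson] at hode
  linear_combination hode - α₂ * hc - p * (-2 * α₂ * c * dawson (c * (p - u / k))) * hk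
    + (-2 * α₂ * c * dawson (c * (p - u / k))) * hku

/-- `ψ` is twice differentiable and solves
`−(ξ+γ)·p·ψ' − u·ψ' + (γ/β)·ψ'' = −α₂·|ξ+γ|` on `ℝ`. -/
theorem psiOU_solves_ODE (γ β α₂ ξ u : ℝ) (hγ : 0 < γ) (hβ : 0 < β) (hα₂ : 0 < α₂)
    (hξ : ξ + γ < 0) :
    (∀ p : ℝ, DifferentiableAt ℝ (psiOU γ β α₂ ξ u) p) ∧
    (∀ p : ℝ, DifferentiableAt ℝ (deriv (psiOU γ β α₂ ξ u)) p) ∧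
    ∀ p : ℝ,
      -(ξ + γ) * p * deriv (psiOU γ β α₂ ξ u) p - u * deriv (psiOU γ β α₂ ξ u) p
          + γ / β * deriv (deriv (psiOU γ β α₂ ξ u)) p
        = -α₂ * |ξ + γ| :=
  psiOU_solves_ODE_general γ β α₂ ξ u hγ hβ hξ
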